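/- Let α > β > 0 be reals with α - β + 1 > 0. Then there exists a constant C = max{(1+α-β)^{-2}, (1+α-β)^{-1}} such that for all real τ, 1/|Γ(α-β+1+iτ)| ≤ e^{C τ²} / Γ(α-β+1). -/

import Mathlib

/-!
Euler's limit `Γ(s) = lim n^s n! / ∏_{j ≤ n} (s + j)` compares `Γ(x)` with `|Γ(x + iτ)|` factor by
factor: `|x + j + iτ| / (x + j) = √(1 + τ²/(x + j)²) ≤ exp (τ² / (2 (x + j)²))`, and
`∑_j (x + j)⁻² ≤ x⁻² + x⁻¹`. Hence `Γ(x) ≤ exp (τ² (x⁻² + x⁻¹) / 2) |Γ(x + iτ)|`, and the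
mean `(x⁻² + x⁻¹) / 2` is at most `max (x⁻², x⁻¹)`.
-/

open Finset

/-- Telescoping against `((x + j) * (x + j + 1))⁻¹ = (x + j)⁻¹ - (x + j + 1)⁻¹`. -/
lemma sum_range_inv_add_natCast_sq_le {x : ℝ} (hx : 0 < x) (n : ℕ) :
    ∑ j ∈ range (n + 1), ((x + j) ^ 2)⁻¹ ≤ x⁻¹ ^ 2 + x⁻¹ - (x + n)⁻¹ := by
  induction n with
  | zero => simp [inv_pow]
  | succ n ih =>
    have hn : 0 < x + n := by positivity
    have hn' : 0 < x + (n + 1) := by positivity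
    have step : ((x + (n + 1)) ^ 2)⁻¹ ≤ (x + n)⁻¹ - (x + (n + 1))⁻¹ := by
      rw [inv_sub_inv hn.ne' hn'.ne', show x + (n + 1) - (x + n) = 1 by ring, one_div, sq]
      exact inv_anti₀ (by positivity) (by gcongr; linarith)
    rw [sum_range_succ]
    push_cast
    linarith

lemma norm_ofReal_add_mul_I_le {a : ℝ} (ha : 0 < a) (τ : ℝ) :
    ‖(a + τ * Complex.I : ℂ)‖ ≤ a * Real.exp (τ ^ 2 / (2 * a ^ 2)) := by
  have hsq : ‖(a + τ * Complex.I : ℂ)‖ ^ 2 ≤ (a * Real.exp (τ ^ 2 / (2 * a ^ 2))) ^ 2 :=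
    calc ‖(a + τ * Complex.I : ℂ)‖ ^ 2 = a ^ 2 * (τ ^ 2 / a ^ 2 + 1) := by
          rw [Complex.sq_norm, Complex.normSq_add_mul_I]; field_simp; ring
      _ ≤ a ^ 2 * Real.exp (τ ^ 2 / a ^ 2) := by gcongr; exact Real.add_one_le_exp _
      _ = (a * Real.exp (τ ^ 2 / (2 * a ^ 2))) ^ 2 := by
          rw [mul_pow, ← Real.exp_nat_mul]; ring_nf
  exact le_of_sq_le_sq hsq (by positivity)

lemma prod_norm_ofReal_add_mul_I_le {ι : Type*} (s : Finset ι) {a : ι → ℝ}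
    (ha : ∀ i ∈ s, 0 < a i) (τ : ℝ) :
    ∏ i ∈ s, ‖(a i + τ * Complex.I : ℂ)‖ ≤
      Real.exp (τ ^ 2 / 2 * ∑ i ∈ s, (a i ^ 2)⁻¹) * ∏ i ∈ s, a i :=
  calc ∏ i ∈ s, ‖(a i + τ * Complex.I : ℂ)‖
      ≤ ∏ i ∈ s, a i * Real.exp (τ ^ 2 / (2 * a i ^ 2)) :=
        prod_le_prod (fun _ _ ↦ norm_nonneg _) fun i hi ↦ norm_ofReal_add_mul_I_le (ha i hi) τ
    _ = Real.exp (τ ^ 2 / 2 * ∑ i ∈ s, (a i ^ 2)⁻¹) * ∏ i ∈ s, a i := by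
        rw [prod_mul_distrib, ← Real.exp_sum, mul_sum, mul_comm]
        congr 2
        exact sum_congr rfl fun i _ ↦ by ring

lemma Complex.norm_GammaSeq (s : ℂ) {n : ℕ} (hn : n ≠ 0) :
    ‖Complex.GammaSeq s n‖ = n ^ s.re * n.factorial / ∏ j ∈ range (n + 1), ‖s + j‖ := by
  rw [Complex.GammaSeq, norm_div, norm_mul, norm_prod, ← Complex.ofReal_natCast,
    Complex.norm_cpow_eq_rpow_re_of_pos (by positivity), Complex.norm_natCast]

lemma Real.GammaSeq_le_exp_mul_norm_GammaSeq {x : ℝ} (hx : 0 < x) (τ : ℝ) (n : ℕ) :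
    Real.GammaSeq x n ≤
      Real.exp (τ ^ 2 / 2 * (x⁻¹ ^ 2 + x⁻¹)) * ‖Complex.GammaSeq (x + τ * Complex.I) n‖ := by
  rcases eq_or_ne n 0 with rfl | hn
  · rw [Real.GammaSeq, Nat.cast_zero, Real.zero_rpow hx.ne', zero_mul, zero_div]
    positivity
  set E := Real.exp (τ ^ 2 / 2 * (x⁻¹ ^ 2 + x⁻¹))
  set P := ∏ j ∈ range (n + 1), (x + j)
  set Q := ∏ j ∈ range (n + 1), ‖(x + τ * Complex.I : ℂ) + j‖
  have hP : 0 < P := prod_pos fun j _ ↦ by positivity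
  have hQ : Q ≤ E * P := by
    have hshift (j : ℕ) : (x + τ * Complex.I : ℂ) + j = ((x + j : ℝ) : ℂ) + τ * Complex.I := by
      push_cast; ring
    simp only [Q, hshift]
    refine (prod_norm_ofReal_add_mul_I_le _ (fun j _ ↦ by positivity) τ).trans ?_
    refine mul_le_mul_of_nonneg_right (Real.exp_le_exp.2 ?_) hP.le
    gcongr
    linarith [sum_range_inv_add_natCast_sq_le hx n, inv_pos.2 (by positivity : 0 < x + n)]
  have hQ_pos : 0 < Q := prod_pos fun j _ ↦ norm_pos_iff.2 fun h0 ↦ by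
    simpa [(by positivity : 0 < x + j).ne'] using congrArg Complex.re h0
  calc Real.GammaSeq x n = E * (n ^ x * n.factorial) / (E * P) := by
        rw [Real.GammaSeq, mul_div_mul_left _ _ (Real.exp_pos _).ne']
    _ ≤ E * (n ^ x * n.factorial) / Q := by gcongr
    _ = E * ‖Complex.GammaSeq (x + τ * Complex.I) n‖ := by
        have hre : (x + τ * Complex.I : ℂ).re = x := by simp
        rw [Complex.norm_GammaSeq _ hn, hre, mul_div_assoc]

lemma Real.Gamma_le_exp_mul_norm_Gamma {x : ℝ} (hx : 0 < x) (τ : ℝ) :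
    Real.Gamma x ≤
      Real.exp (τ ^ 2 / 2 * (x⁻¹ ^ 2 + x⁻¹)) * ‖Complex.Gamma (x + τ * Complex.I)‖ :=
  le_of_tendsto_of_tendsto' (Real.GammaSeq_tendsto_Gamma x)
    (((Complex.GammaSeq_tendsto_Gamma _).norm).const_mul _)
    (Real.GammaSeq_le_exp_mul_norm_GammaSeq hx τ)

theorem inv_gamma_vertical_line_bound_general (α β : ℝ)
    (h : 0 < α - β + 1) :
    ∃ C : ℝ, C = max ((1 + α - β) ^ (-2 : ℝ)) ((1 + α - β) ^ (-1 : ℝ)) ∧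
      ∀ τ : ℝ,
        1 / ‖Complex.Gamma ((α : ℂ) - β + 1 + τ * Complex.I)‖ ≤
          Real.exp (C * τ ^ 2) / Real.Gamma (α - β + 1) := by
  set x := α - β + 1
  have hC : max ((1 + α - β) ^ (-2 : ℝ)) ((1 + α - β) ^ (-1 : ℝ)) = max (x⁻¹ ^ 2) x⁻¹ := by
    rw [show 1 + α - β = x by ring, Real.rpow_neg h.le, Real.rpow_two, Real.rpow_neg_one,
      inv_pow]
  refine ⟨_, rfl, fun τ ↦ ?_⟩
  have hs : (α : ℂ) - β + 1 + τ * Complex.I = (x : ℂ) + τ * Complex.I := by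
    simp only [x]; push_cast; ring
  have hΓ : 0 < ‖Complex.Gamma (x + τ * Complex.I)‖ :=
    norm_pos_iff.2 (Complex.Gamma_ne_zero_of_re_pos (by simpa using h))
  have hE : Real.exp (τ ^ 2 / 2 * (x⁻¹ ^ 2 + x⁻¹)) ≤ Real.exp (max (x⁻¹ ^ 2) x⁻¹ * τ ^ 2) := by
    refine Real.exp_le_exp.2 ?_
    have hmean : (x⁻¹ ^ 2 + x⁻¹) / 2 ≤ max (x⁻¹ ^ 2) x⁻¹ := by
      linarith [le_max_left (x⁻¹ ^ 2) x⁻¹, le_max_right (x⁻¹ ^ 2) x⁻¹]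
    linarith [mul_le_mul_of_nonneg_right hmean (sq_nonneg τ)]
  rw [hs, hC, div_le_div_iff₀ hΓ (Real.Gamma_pos_of_pos h), one_mul]
  exact (Real.Gamma_le_exp_mul_norm_Gamma h τ).trans (by gcongr)

theorem inv_gamma_vertical_line_bound (α β : ℝ) (hβ : 0 < β) (hαβ : β < α)
    (h : 0 < α - β + 1) :
    ∃ C : ℝ, C = max ((1 + α - β) ^ (-2 : ℝ)) ((1 + α - β) ^ (-1 : ℝ)) ∧
      ∀ τ : ℝ,
        1 / ‖Complex.Gamma ((α : ℂ) - β + 1 + τ * Complex.I)‖ ≤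
          Real.exp (C * τ ^ 2) / Real.Gamma (α - β + 1) :=
  inv_gamma_vertical_line_bound_general α β h
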